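/- Let G be an oriented hypergraph and (S,c) a diagonally reduced contributor of G with unused edge set T, and let (T,c*) be its contributor-dual in G*, c*(ω(t_v)) = (h_v, t_{π_c(v)}). Then csgn(c*) = csgn(c). -/

import Mathlib

/-!
The tail-edge map `v ↦ ω(t_v)` is a bijection from `V ∖ S` onto `E ∖ T`, and it conjugates
`π_c` to `π_{c*}`: the head of `c*(ω t_v)` is `h_v`, whose edge is `ω(t_{π_c v})`. So the orbits
of `π_c` and `π_{c*}` outside the fixed sets `S` and `T` correspond, with the same sizes, while
the fixed points of `S` and `T` are singletons that are neither even nor negative. By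
edge-monicity, `c*` has a backstep at `ω(t_v)` exactly when `c` has one at `v`. Finally the sign
product of a dual orbit is `∏ -σ(h_v)σ(t_{π_c v})`, which equals that of the original orbit after
reindexing the tails along `π_c`.
-/

open Matrix
open scoped Classical

noncomputable section

/-- An oriented hypergraph `G = (V, E, I, ς, ω, σ)`: `vtx = ς` assigns each incidence
its vertex, `edg = ω` assigns each incidence its edge, and `sgn = σ` is its sign. -/
structure OHG (V E I : Type*) where
  vtx : I → V
  edg : I → E
  sgn : I → ℤˣ

/-- The incidence dual `G* = (E, V, I, ω, ς, σ)`. -/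
def OHG.dual {V E I : Type*} (G : OHG V E I) : OHG E V I :=
  ⟨G.edg, G.vtx, G.sgn⟩

section Defs

variable {V E I : Type*} [Fintype V] [DecidableEq V] [Fintype E] [DecidableEq E]
  [Fintype I] [DecidableEq I]

/-- A diagonally reduced contributor `(S, c)`: `c : V∖S → I × I`, tails sit at their
vertices, tail and head share an edge, the head map is a permutation of `V∖S`, and `c`
is edge-monic. -/
def IsDiagRed (G : OHG V E I) (S : Finset V) (c : {v : V // v ∉ S} → I × I) : Prop :=
  (∀ v, G.vtx (c v).1 = v.1) ∧ (∀ v, G.edg (c v).1 = G.edg (c v).2) ∧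
    Set.BijOn (fun v : {v : V // v ∉ S} => G.vtx (c v).2) Set.univ {w : V | w ∉ S} ∧
    Function.Injective fun v : {v : V // v ∉ S} => G.edg (c v).1

/-- The unused edge set `T = E ∖ {ω (t_v) : v ∈ V∖S}` of a diagonally reduced
contributor. -/
def unusedT (G : OHG V E I) (S : Finset V) (c : {v : V // v ∉ S} → I × I) :
    Finset E :=
  Finset.univ.filter fun e => ∀ v : {v : V // v ∉ S}, G.edg (c v).1 ≠ e

/-- The head map of a diagonally reduced contributor, extended to all of `V` by the
identity on `S`. -/
def gmapD (G : OHG V E I) (S : Finset V) (c : {v : V // v ∉ S} → I × I) : V → V :=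
  fun v => if h : v ∈ S then v else G.vtx (c ⟨v, h⟩).2

/-- The orbit of `v` under iteration of `f` (for `f` a bijection of a finite type this
is the full cycle of `v`). -/
def orbitOf {α : Type*} [Fintype α] [DecidableEq α] (f : α → α) (a : α) : Finset α :=
  Finset.univ.filter fun b => ∃ n : ℕ, f^[n] a = b

/-- The set of orbits of `f`. -/
def orbitsOf {α : Type*} [Fintype α] [DecidableEq α] (f : α → α) :
    Finset (Finset α) :=
  Finset.univ.image (orbitOf f)

/-- `ec c`: the number of orbits of `π_c` of even cardinality. -/
def ecD (G : OHG V E I) (S : Finset V) (c : {v : V // v ∉ S} → I × I) : ℕ :=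
  ((orbitsOf (gmapD G S c)).filter fun O => Even O.card).card

/-- `bs c`: the number of backsteps of a diagonally reduced contributor. -/
def bsD (G : OHG V E I) (S : Finset V) (c : {v : V // v ∉ S} → I × I) : ℕ :=
  (Finset.univ.filter fun v : {v : V // v ∉ S} => (c v).1 = (c v).2).card

/-- A negative orbit: not a single backstep, and the product of the adjacency signs
`-σ(t_v)·σ(h_v)` over the orbit is `-1`. -/
def NegOrbitD (G : OHG V E I) (S : Finset V) (c : {v : V // v ∉ S} → I × I)
    (O : Finset V) : Prop :=
  (¬ ∃ v : {v : V // v ∉ S}, O = {v.1} ∧ (c v).1 = (c v).2) ∧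
    ∏ v ∈ Finset.univ.filter (fun v : {v : V // v ∉ S} => v.1 ∈ O),
      (-(G.sgn (c v).1 * G.sgn (c v).2)) = (-1 : ℤˣ)

/-- `nc c`: the number of negative orbits of a diagonally reduced contributor. -/
def ncD (G : OHG V E I) (S : Finset V) (c : {v : V // v ∉ S} → I × I) : ℕ :=
  ((orbitsOf (gmapD G S c)).filter (NegOrbitD G S c)).card

/-- The sign `csgn c = (-1) ^ (ec c + nc c + bs c)` of a diagonally reduced
contributor. -/
def csgnD (G : OHG V E I) (S : Finset V) (c : {v : V // v ∉ S} → I × I) : ℤ :=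
  (-1) ^ (ecD G S c + ncD G S c + bsD G S c)

/-- The incidence matrix of an oriented hypergraph. -/
def incM (G : OHG V E I) : Matrix V E ℤ :=
  Matrix.of fun v e =>
    ∑ i ∈ Finset.univ.filter (fun i => G.vtx i = v ∧ G.edg i = e), (G.sgn i : ℤ)

/-- The Laplacian `L = H Hᵀ` of an oriented hypergraph. -/
def lapM (G : OHG V E I) : Matrix V V ℤ :=
  incM G * (incM G)ᵀ

end Defs

open Finset Function

section Orbits

variable {α γ : Type*} [Fintype α] [DecidableEq α] [Fintype γ] [DecidableEq γ]

theorem mem_orbitOf {f : α → α} {a b : α} : b ∈ orbitOf f a ↔ ∃ n : ℕ, f^[n] a = b := by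
  simp [orbitOf]

theorem mem_orbitsOf {f : α → α} {O : Finset α} : O ∈ orbitsOf f ↔ ∃ a, orbitOf f a = O := by
  simp [orbitsOf]

theorem orbitOf_eq_singleton {f : α → α} {a : α} (h : f a = a) : orbitOf f a = {a} := by
  ext b
  simp only [mem_orbitOf, mem_singleton]
  constructor
  · rintro ⟨n, rfl⟩
    exact iterate_fixed h n
  · rintro rfl
    exact ⟨0, rfl⟩

theorem mapsTo_orbitOf (f : α → α) (a : α) : Set.MapsTo f (orbitOf f a) (orbitOf f a) := by
  intro b hb
  obtain ⟨n, rfl⟩ := mem_orbitOf.mp hb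
  exact mem_orbitOf.mpr ⟨n + 1, iterate_succ_apply' f n a⟩

theorem image_orbitOf_of_injective {f : α → α} (hf : Injective f) (a : α) :
    (orbitOf f a).image f = orbitOf f a :=
  eq_of_subset_of_card_le (image_subset_iff.mpr (mapsTo_orbitOf f a))
    (card_image_of_injective _ hf).ge

theorem prod_orbitOf_comp {M : Type*} [CommMonoid M] {f : α → α} (hf : Injective f) (a : α)
    (g : α → M) : ∏ x ∈ orbitOf f a, g (f x) = ∏ x ∈ orbitOf f a, g x := by
  conv_rhs => rw [← image_orbitOf_of_injective hf a]
  rw [prod_image hf.injOn]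

theorem orbitOf_semiconj {f : α → α} {p : γ → γ} (ψ : γ ↪ α) (h : Semiconj ψ p f) (a : γ) :
    orbitOf f (ψ a) = (orbitOf p a).map ψ := by
  ext b
  simp only [mem_map, mem_orbitOf]
  constructor
  · rintro ⟨n, rfl⟩
    exact ⟨p^[n] a, ⟨n, rfl⟩, h.iterate_right n a⟩
  · rintro ⟨_, ⟨n, rfl⟩, rfl⟩
    exact ⟨n, (h.iterate_right n a).symm⟩

theorem card_filter_orbitsOf_of_semiconj {f : α → α} {p : γ → γ} {S : Finset α} (ψ : γ ↪ α)
    (hψ : ∀ a ∉ S, a ∈ Set.range ψ) (hS : ∀ s ∈ S, f s = s) (h : Semiconj ψ p f)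
    (P : Finset α → Prop) [DecidablePred P] (hP : ∀ s ∈ S, ¬ P {s}) :
    ((orbitsOf f).filter P).card = ((orbitsOf p).filter fun O => P (O.map ψ)).card := by
  symm
  refine card_bij (fun O _ => O.map ψ) ?_ (fun _ _ _ _ => map_inj.mp) ?_
  · intro O hO
    obtain ⟨hO, hPO⟩ := mem_filter.mp hO
    obtain ⟨a, rfl⟩ := mem_orbitsOf.mp hO
    exact mem_filter.mpr ⟨mem_orbitsOf.mpr ⟨ψ a, orbitOf_semiconj ψ h a⟩, hPO⟩
  · intro O hO
    obtain ⟨hO, hPO⟩ := mem_filter.mp hO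
    obtain ⟨b, rfl⟩ := mem_orbitsOf.mp hO
    by_cases hb : b ∈ S
    · exact absurd (orbitOf_eq_singleton (hS b hb) ▸ hPO) (hP b hb)
    obtain ⟨a, rfl⟩ := hψ b hb
    rw [orbitOf_semiconj ψ h a] at hPO ⊢
    exact ⟨orbitOf p a, mem_filter.mpr ⟨mem_orbitsOf.mpr ⟨a, rfl⟩, hPO⟩, rfl⟩

end Orbits

section Contributor

variable {V E I : Type*}

theorem not_negOrbitD_singleton [Fintype V] [DecidableEq V] (G : OHG V E I) {S : Finset V}
    (c : {v : V // v ∉ S} → I × I) {s : V} (hs : s ∈ S) : ¬ NegOrbitD G S c {s} := by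
  rintro ⟨-, hprod⟩
  have hempty : univ.filter (fun v : {v // v ∉ S} => v.1 ∈ ({s} : Finset V)) = ∅ :=
    filter_false_of_mem fun v _ hv => v.2 (mem_singleton.mp hv ▸ hs)
  rw [hempty, prod_empty] at hprod
  exact absurd hprod (by decide)

theorem negOrbitD_map_subtype_iff [Fintype V] [DecidableEq V] (G : OHG V E I) {S : Finset V}
    (c : {v : V // v ∉ S} → I × I) (O : Finset {v : V // v ∉ S}) :
    NegOrbitD G S c (O.map (Embedding.subtype _)) ↔
      (¬ ∃ v, O = {v} ∧ (c v).1 = (c v).2) ∧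
        ∏ v ∈ O, -(G.sgn (c v).1 * G.sgn (c v).2) = -1 := by
  have hfilter : univ.filter (fun v : {v // v ∉ S} => v.1 ∈ O.map (Embedding.subtype _)) = O := by
    ext v
    simp only [mem_filter, mem_univ, true_and, mem_map, Embedding.subtype_apply, Subtype.val_inj,
      exists_eq_right]
  have hsingle (v : {v // v ∉ S}) : O.map (Embedding.subtype _) = {v.1} ↔ O = {v} := by
    rw [← map_inj (f := Embedding.subtype _), map_singleton]
    rfl
  simp only [NegOrbitD, hfilter, hsingle]

namespace IsDiagRed

variable {G : OHG V E I} {S : Finset V} {c : {v : V // v ∉ S} → I × I}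

theorem head_notMem (hc : IsDiagRed G S c) (v : {v : V // v ∉ S}) : G.vtx (c v).2 ∉ S :=
  hc.2.2.1.mapsTo trivial

/-- `π_c` as a map of `V ∖ S`. -/
def headMap (hc : IsDiagRed G S c) (v : {v : V // v ∉ S}) : {v : V // v ∉ S} :=
  ⟨G.vtx (c v).2, hc.head_notMem v⟩

theorem headMap_injective (hc : IsDiagRed G S c) : Injective hc.headMap := fun _ _ hab =>
  hc.2.2.1.injOn trivial trivial (congrArg Subtype.val hab)

theorem semiconj_headMap [DecidableEq V] (hc : IsDiagRed G S c) :
    Semiconj (Embedding.subtype _) hc.headMap (gmapD G S c) :=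
  fun v => by simp [gmapD, headMap, v.2]

theorem card_filter_orbitsOf_gmapD [Fintype V] [DecidableEq V] (hc : IsDiagRed G S c)
    (P : Finset V → Prop) [DecidablePred P] (hP : ∀ s ∈ S, ¬ P {s}) :
    ((orbitsOf (gmapD G S c)).filter P).card =
      ((orbitsOf hc.headMap).filter fun O => P (O.map (Embedding.subtype _))).card :=
  card_filter_orbitsOf_of_semiconj _ (fun v hv => ⟨⟨v, hv⟩, rfl⟩) (fun _ hs => dif_pos hs)
    hc.semiconj_headMap P hP

end IsDiagRed

variable [Fintype V] [DecidableEq V] [Fintype E] [DecidableEq E]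

theorem tailEdge_notMem_unusedT (G : OHG V E I) {S : Finset V} (c : {v : V // v ∉ S} → I × I)
    (v : {v : V // v ∉ S}) : G.edg (c v).1 ∉ unusedT G S c := by
  simp only [unusedT, mem_filter, mem_univ, true_and, not_forall, not_not]
  exact ⟨v, rfl⟩

/-- `cd` is the contributor-dual of `c`: `c*(ω t_v) = (h_v, t_{π_c v})`. -/
def IsContributorDual (G : OHG V E I) (S : Finset V) (c : {v : V // v ∉ S} → I × I)
    (cd : {e : E // e ∉ unusedT G S c} → I × I) : Prop :=
  ∀ (v : {v : V // v ∉ S}) (he : G.edg (c v).1 ∉ unusedT G S c) (hp : G.vtx (c v).2 ∉ S),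
    cd ⟨G.edg (c v).1, he⟩ = ((c v).2, (c ⟨G.vtx (c v).2, hp⟩).1)

namespace IsDiagRed

variable {G : OHG V E I} {S : Finset V} {c : {v : V // v ∉ S} → I × I}
  {cd : {e : E // e ∉ unusedT G S c} → I × I}

def tailEdgeEquiv (hc : IsDiagRed G S c) : {v : V // v ∉ S} ≃ {e : E // e ∉ unusedT G S c} :=
  Equiv.ofBijective (fun v => ⟨G.edg (c v).1, tailEdge_notMem_unusedT G c v⟩)
    ⟨fun _ _ h => hc.2.2.2 (congrArg Subtype.val h), fun ⟨e, he⟩ => by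
      simp only [unusedT, mem_filter, mem_univ, true_and, not_forall, not_not] at he
      obtain ⟨v, hv⟩ := he
      exact ⟨v, Subtype.ext hv⟩⟩

def tailEdge (hc : IsDiagRed G S c) : {v : V // v ∉ S} ↪ E :=
  hc.tailEdgeEquiv.toEmbedding.trans (Embedding.subtype _)

theorem apply_tailEdgeEquiv (hc : IsDiagRed G S c) (hcd : IsContributorDual G S c cd)
    (v : {v : V // v ∉ S}) : cd (hc.tailEdgeEquiv v) = ((c v).2, (c (hc.headMap v)).1) :=
  hcd v _ _

theorem semiconj_tailEdge (hc : IsDiagRed G S c) (hcd : IsContributorDual G S c cd) :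
    Semiconj hc.tailEdge hc.headMap (gmapD G.dual (unusedT G S c) cd) := fun v => by
  show _ = dite _ _ _
  rw [dif_neg (show hc.tailEdge v ∉ unusedT G S c from (hc.tailEdgeEquiv v).2)]
  exact (congrArg (fun i : I × I => G.edg i.2) (hc.apply_tailEdgeEquiv hcd v)).symm

theorem card_filter_orbitsOf_gmapD_dual (hc : IsDiagRed G S c) (hcd : IsContributorDual G S c cd)
    (P : Finset E → Prop) [DecidablePred P] (hP : ∀ t ∈ unusedT G S c, ¬ P {t}) :
    ((orbitsOf (gmapD G.dual (unusedT G S c) cd)).filter P).card =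
      ((orbitsOf hc.headMap).filter fun O => P (O.map hc.tailEdge)).card :=
  card_filter_orbitsOf_of_semiconj _
    (fun e he => ⟨hc.tailEdgeEquiv.symm ⟨e, he⟩, by simp [tailEdge]⟩) (fun _ ht => dif_pos ht)
    (hc.semiconj_tailEdge hcd) P hP

/-- Edge-monicity: `h_v = t_{π_c v}` forces `π_c v = v`. -/
theorem backstep_dual_iff (hc : IsDiagRed G S c) (hcd : IsContributorDual G S c cd)
    (v : {v : V // v ∉ S}) :
    (cd (hc.tailEdgeEquiv v)).1 = (cd (hc.tailEdgeEquiv v)).2 ↔ (c v).1 = (c v).2 := by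
  rw [hc.apply_tailEdgeEquiv hcd v]
  dsimp only
  constructor
  · intro h
    have hfix : hc.headMap v = v := hc.2.2.2 (show G.edg (c (hc.headMap v)).1 = G.edg (c v).1 by
      rw [← h, hc.2.1 v])
    rw [hfix] at h
    exact h.symm
  · intro h
    have hfix : hc.headMap v = v := Subtype.ext (show G.vtx (c v).2 = v.1 by
      rw [← h]; exact hc.1 v)
    rw [hfix, h]

theorem bsD_dual [DecidableEq I] (hc : IsDiagRed G S c) (hcd : IsContributorDual G S c cd) :
    bsD G.dual (unusedT G S c) cd = bsD G S c :=
  (card_equiv hc.tailEdgeEquiv fun v => by simp [hc.backstep_dual_iff hcd v]).symm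

theorem ecD_dual (hc : IsDiagRed G S c) (hcd : IsContributorDual G S c cd) :
    ecD G.dual (unusedT G S c) cd = ecD G S c := by
  rw [ecD, ecD, hc.card_filter_orbitsOf_gmapD_dual hcd _ (fun _ _ => by simp),
    hc.card_filter_orbitsOf_gmapD _ (fun _ _ => by simp)]
  simp only [card_map]

theorem negOrbitD_dual_map_iff (hc : IsDiagRed G S c) (hcd : IsContributorDual G S c cd)
    (a : {v : V // v ∉ S}) :
    NegOrbitD G.dual (unusedT G S c) cd ((orbitOf hc.headMap a).map hc.tailEdge) ↔
      NegOrbitD G S c ((orbitOf hc.headMap a).map (Embedding.subtype _)) := by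
  set O := orbitOf hc.headMap a
  rw [tailEdge, ← Finset.map_map, negOrbitD_map_subtype_iff, negOrbitD_map_subtype_iff]
  refine and_congr (not_congr (hc.tailEdgeEquiv.exists_congr fun v => ?_).symm) ?_
  · rw [hc.backstep_dual_iff hcd v, ← map_inj (f := hc.tailEdgeEquiv.toEmbedding), map_singleton]
    rfl
  · rw [prod_map]
    refine Eq.congr_left ?_
    calc ∏ v ∈ O,
          -(G.dual.sgn (cd (hc.tailEdgeEquiv v)).1 * G.dual.sgn (cd (hc.tailEdgeEquiv v)).2)
        = (∏ v ∈ O, -G.sgn (c v).2) * ∏ v ∈ O, G.sgn (c (hc.headMap v)).1 := by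
          rw [← prod_mul_distrib]
          refine prod_congr rfl fun v _ => ?_
          rw [hc.apply_tailEdgeEquiv hcd v, neg_mul]
          rfl
      _ = (∏ v ∈ O, -G.sgn (c v).2) * ∏ v ∈ O, G.sgn (c v).1 := by
          rw [prod_orbitOf_comp hc.headMap_injective a fun w => G.sgn (c w).1]
      _ = ∏ v ∈ O, -(G.sgn (c v).1 * G.sgn (c v).2) := by
          rw [← prod_mul_distrib]
          refine prod_congr rfl fun v _ => ?_
          rw [neg_mul, mul_comm]

theorem ncD_dual (hc : IsDiagRed G S c) (hcd : IsContributorDual G S c cd) :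
    ncD G.dual (unusedT G S c) cd = ncD G S c := by
  rw [ncD, ncD, hc.card_filter_orbitsOf_gmapD_dual hcd _ fun _ => not_negOrbitD_singleton _ _,
    hc.card_filter_orbitsOf_gmapD _ fun _ => not_negOrbitD_singleton _ _]
  refine congrArg card (filter_congr fun O hO => ?_)
  obtain ⟨a, rfl⟩ := mem_orbitsOf.mp hO
  exact hc.negOrbitD_dual_map_iff hcd a

end IsDiagRed

end Contributor

variable {V E I : Type*} [Fintype V] [DecidableEq V] [Fintype E] [DecidableEq E]
  [Fintype I] [DecidableEq I]

/-- If `(S, c)` is a diagonally reduced contributor of `G` with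
unused edge set `T` and `(T, c*)` is its contributor-dual in `G*`, given by
`c* (ω (t_v)) = (h_v, t_{π_c v})`, then `csgn c* = csgn c`. -/
theorem csgn_dual_eq (G : OHG V E I) (S : Finset V)
    (c : {v : V // v ∉ S} → I × I) (hc : IsDiagRed G S c)
    (cd : {e : E // e ∉ unusedT G S c} → I × I)
    (hcd : ∀ (v : {v : V // v ∉ S}) (he : G.edg (c v).1 ∉ unusedT G S c)
        (hp : G.vtx (c v).2 ∉ S),
        cd ⟨G.edg (c v).1, he⟩ = ((c v).2, (c ⟨G.vtx (c v).2, hp⟩).1)) :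
    csgnD G.dual (unusedT G S c) cd = csgnD G S c := by
  rw [csgnD, csgnD, hc.ecD_dual hcd, hc.ncD_dual hcd, hc.bsD_dual hcd]
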